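/- Let Ḡ : E → ℝ be continuous and satisfy the integral equation Ḡ = G0 + Φ_Ḡ on E, and set δ := max_{(ξ,η)∈E} |Φ_Ḡ(ξ,η)|. Then for every n ∈ ℕ (n ≥ 0) and every (ξ,η) ∈ E, the successive approximations satisfy |G_n(ξ,η) − Ḡ(ξ,η)| ≤ (δ M^n / n!)·(ξ+η)^n, where M := (f̄ + Λ̄)/2. -/

import Mathlib

open MeasureTheory Set
open scoped ENNReal

noncomputable section

/-- The triangular domain `D = {(x,y) : 0 ≤ y ≤ x ≤ 1}`. -/
def Dset : Set (ℝ × ℝ) := {p : ℝ × ℝ | 0 ≤ p.2 ∧ p.2 ≤ p.1 ∧ p.1 ≤ 1}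

/-- Partial derivative in the first variable (within `D`). -/
def pd1 (K : ℝ × ℝ → ℝ) (p : ℝ × ℝ) : ℝ := fderivWithin ℝ K Dset p (1, 0)

/-- Partial derivative in the second variable (within `D`). -/
def pd2 (K : ℝ × ℝ → ℝ) (p : ℝ × ℝ) : ℝ := fderivWithin ℝ K Dset p (0, 1)

/-- `K` is a `C²` solution of the kernel equation on `D`:
(i) `k_xx - k_yy = μ k + f + ∫_y^x k(x,z) f(z,y) dz` on `D`;
(ii) `k_x(x,x) + k_y(x,x) = λ0/2`; (iii) `k_y(x,0) = 0`; (iv) `k(0,0) = 0`. -/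
def IsKernelSol (lam0 : ℝ) (c1 : ℝ → ℝ) (f : ℝ → ℝ → ℝ) (K : ℝ × ℝ → ℝ) : Prop :=
  ContDiffOn ℝ 2 K Dset ∧
  (∀ p ∈ Dset, pd1 (pd1 K) p - pd2 (pd2 K) p =
      (lam0 - c1 p.1 + c1 p.2) * K p + f p.1 p.2 + ∫ z in p.2..p.1, K (p.1, z) * f z p.2) ∧
  (∀ x ∈ Icc (0:ℝ) 1, pd1 K (x, x) + pd2 K (x, x) = lam0 / 2) ∧
  (∀ x ∈ Icc (0:ℝ) 1, pd2 K (x, 0) = 0) ∧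
  K (0, 0) = 0

/-- `f̄ := max_{[0,1]²} |f|`. -/
def fbar (f : ℝ → ℝ → ℝ) : ℝ :=
  sSup ((fun p : ℝ × ℝ => |f p.1 p.2|) '' (Icc (0:ℝ) 1 ×ˢ Icc (0:ℝ) 1))

/-- `Λ̄ := max {λ0, max_D |λ0 - c1(x) + c1(y)|}`. -/
def Lambdabar (lam0 : ℝ) (c1 : ℝ → ℝ) : ℝ :=
  max lam0 (sSup ((fun p : ℝ × ℝ => |lam0 - c1 p.1 + c1 p.2|) '' Dset))

/-- `M := (f̄ + Λ̄)/2`. -/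
def Mconst (lam0 : ℝ) (c1 : ℝ → ℝ) (f : ℝ → ℝ → ℝ) : ℝ :=
  (fbar f + Lambdabar lam0 c1) / 2

/-- The transformed domain `E = {(ξ,η) : 0 ≤ η ≤ 1, η ≤ ξ ≤ 2 - η}`. -/
def Eset : Set (ℝ × ℝ) := {p : ℝ × ℝ | 0 ≤ p.2 ∧ p.2 ≤ 1 ∧ p.2 ≤ p.1 ∧ p.1 ≤ 2 - p.2}

/-- `μ̃(ξ,η) := λ0 - c1((ξ+η)/2) + c1((ξ-η)/2)`. -/
def mutld (lam0 : ℝ) (c1 : ℝ → ℝ) (xi eta : ℝ) : ℝ :=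
  lam0 - c1 ((xi + eta) / 2) + c1 ((xi - eta) / 2)

/-- The inhomogeneous term `G0` of the integral equation. -/
def Gzero (lam0 : ℝ) (f : ℝ → ℝ → ℝ) (xi eta : ℝ) : ℝ :=
  lam0 / 4 * (xi + eta)
    + (1 / 4) * (∫ tau in eta..xi, ∫ s in (0:ℝ)..eta, f ((tau + s) / 2) ((tau - s) / 2))
    + (1 / 2) * (∫ tau in (0:ℝ)..eta, ∫ s in (0:ℝ)..tau, f ((tau + s) / 2) ((tau - s) / 2))

/-- The integral operator `Φ_H`. -/
def Phi (lam0 : ℝ) (c1 : ℝ → ℝ) (f : ℝ → ℝ → ℝ) (H : ℝ → ℝ → ℝ) (xi eta : ℝ) : ℝ :=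
  (1 / 4) * (∫ tau in eta..xi, ∫ s in (0:ℝ)..eta, mutld lam0 c1 tau s * H tau s)
    + (1 / 2) * (∫ tau in (0:ℝ)..eta, ∫ s in (0:ℝ)..tau, mutld lam0 c1 tau s * H tau s)
    + (1 / 4) * (∫ z in eta..xi, ∫ s in (0:ℝ)..eta, ∫ tau in z..(z + eta - s),
        f ((tau - s) / 2) (z - (tau + s) / 2) * H tau s)
    + (1 / 2) * (∫ z in (0:ℝ)..eta, ∫ s in (0:ℝ)..z, ∫ tau in z..(2 * z - s),
        f ((tau - s) / 2) (z - (tau + s) / 2) * H tau s)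

/-- The successive approximations `G_0 := G0`, `G_{n+1} := G0 + Φ_{G_n}`. -/
def Gseq (lam0 : ℝ) (c1 : ℝ → ℝ) (f : ℝ → ℝ → ℝ) : ℕ → ℝ → ℝ → ℝ
  | 0 => Gzero lam0 f
  | n + 1 => fun xi eta => Gzero lam0 f xi eta + Phi lam0 c1 f (Gseq lam0 c1 f n) xi eta

/-!
By linearity of `Φ`, `G_{n+1} - Ḡ = Φ_{G_n - Ḡ}`, and `Φ` raises the degree of a power
weight: if `|H(τ,s)| ≤ c (τ+s)^n` on `E` then `|Φ_H(ξ,η)| ≤ c M (ξ+η)^(n+1) / (n+1)`,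
because on each of the four integration regions the relevant sum `τ + s` stays below the outer
variable shifted by `η`, the inner lengths are at most `η ≤ 1`, and the outer integral of
`(τ+η)^n` produces the factor `1/(n+1)`. Induction from `|G_0 - Ḡ| = |Φ_Ḡ| ≤ δ` gives the claim.
Linearity needs integrability of the iterated integrands; it is obtained by extending `c1`, `f`
and the kernels continuously to the whole plane (Tietze), which does not change `Φ` on `E`.
-/

universe u v

lemma mem_Eset_iff {τ s : ℝ} : (τ, s) ∈ Eset ↔ 0 ≤ s ∧ s ≤ 1 ∧ s ≤ τ ∧ τ ≤ 2 - s := Iff.rfl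

lemma isClosed_Eset : IsClosed Eset := by
  simp only [Eset, ofPred_and]
  exact (isClosed_le continuous_const continuous_snd).inter
    ((isClosed_le continuous_snd continuous_const).inter
      ((isClosed_le continuous_snd continuous_fst).inter
        (isClosed_le continuous_fst (continuous_const.sub continuous_snd))))

lemma isCompact_Dset : IsCompact Dset := by
  refine (isCompact_Icc.prod isCompact_Icc : IsCompact (Icc (0:ℝ) 1 ×ˢ Icc (0:ℝ) 1))
    |>.of_isClosed_subset ?_ ?_
  · simp only [Dset, ofPred_and]
    exact (isClosed_le continuous_const continuous_snd).inter
      ((isClosed_le continuous_snd continuous_fst).inter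
        (isClosed_le continuous_fst continuous_const))
  · rintro ⟨x, y⟩ ⟨h0, hyx, hx1⟩
    exact ⟨⟨h0.trans hyx, hx1⟩, ⟨h0, hyx.trans hx1⟩⟩

lemma ContinuousOn.exists_continuous_eqOn {X : Type u} {Y : Type v} [TopologicalSpace X]
    [NormalSpace X] [TopologicalSpace Y] [TietzeExtension.{u, v} Y] {s : Set X} {g : X → Y}
    (hg : ContinuousOn g s) (hs : IsClosed s) : ∃ G : X → Y, Continuous G ∧ EqOn G g s := by
  obtain ⟨G, hG⟩ := ContinuousMap.exists_restrict_eq hs ⟨s.domRestrict g, hg.domRestrict⟩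
  exact ⟨G, G.continuous, fun x hx => congr($hG ⟨x, hx⟩)⟩

open intervalIntegral in
@[fun_prop]
theorem continuous_parametric_intervalIntegral_of_continuous_bounds {X : Type*}
    [TopologicalSpace X] [FirstCountableTopology X] {g : X → ℝ → ℝ}
    (hg : Continuous fun p : X × ℝ => g p.1 p.2) {a b : X → ℝ} (ha : Continuous a)
    (hb : Continuous b) :
    Continuous fun x => ∫ t in a x..b x, g x t := by
  have hsplit : ∀ x,
      ∫ t in a x..b x, g x t = (∫ t in 0..b x, g x t) - ∫ t in 0..a x, g x t :=
    fun x => (integral_interval_sub_left ((hg.uncurry_left x).intervalIntegrable _ _)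
      ((hg.uncurry_left x).intervalIntegrable _ _)).symm
  simp only [hsplit]
  fun_prop

lemma intervalIntegral_congr_of_le {g h : ℝ → ℝ} {a b : ℝ} (hab : a ≤ b)
    (hgh : ∀ x ∈ Icc a b, g x = h x) : ∫ x in a..b, g x = ∫ x in a..b, h x :=
  intervalIntegral.integral_congr fun x hx => hgh x (by rwa [uIcc_of_le hab] at hx)

lemma abs_intervalIntegral_le_of_le_const {g : ℝ → ℝ} {a b C ℓ : ℝ} (hab : a ≤ b)
    (hℓ : b - a ≤ ℓ) (hg : ∀ x ∈ Icc a b, |g x| ≤ C) :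
    |∫ x in a..b, g x| ≤ C * ℓ := by
  have hC : 0 ≤ C := (abs_nonneg _).trans (hg a (left_mem_Icc.2 hab))
  calc |∫ x in a..b, g x| ≤ C * |b - a| :=
        intervalIntegral.norm_integral_le_of_norm_le_const (f := g) fun x hx =>
          hg x (Ioc_subset_Icc_self (by rwa [uIoc_of_le hab] at hx))
    _ ≤ C * ℓ := by rw [abs_of_nonneg (sub_nonneg.2 hab)]; gcongr

lemma abs_intervalIntegral_le_of_le_pow {g : ℝ → ℝ} {a b d W : ℝ} {n : ℕ} (hab : a ≤ b)
    (hg : ∀ x ∈ Icc a b, |g x| ≤ W * (x + d) ^ n) :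
    |∫ x in a..b, g x| ≤ W * ((b + d) ^ (n + 1) - (a + d) ^ (n + 1)) / (n + 1) := by
  have := intervalIntegral.norm_integral_le_of_norm_le (μ := volume) (f := g)
    (g := fun x => W * (x + d) ^ n) hab
    (Filter.Eventually.of_forall fun x hx => hg x (Ioc_subset_Icc_self hx))
    (Continuous.intervalIntegrable (by fun_prop) a b)
  rwa [intervalIntegral.integral_const_mul, intervalIntegral.integral_comp_add_right
    (fun x => x ^ n), integral_pow, ← mul_div_assoc] at this

section Constants

variable {lam0 : ℝ} {c1 : ℝ → ℝ} {f : ℝ → ℝ → ℝ}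

lemma abs_mutld_le_Lambdabar (hc1 : ContinuousOn c1 (Icc 0 1)) {τ s : ℝ}
    (hp : (τ, s) ∈ Eset) :
    |mutld lam0 c1 τ s| ≤ Lambdabar lam0 c1 := by
  obtain ⟨h0, h1, h2, h3⟩ := mem_Eset_iff.1 hp
  have hD : ∀ p ∈ Dset, p.1 ∈ Icc (0:ℝ) 1 ∧ p.2 ∈ Icc (0:ℝ) 1 :=
    fun p ⟨h0, hyx, hx1⟩ => ⟨⟨h0.trans hyx, hx1⟩, ⟨h0, hyx.trans hx1⟩⟩
  have hcont : ContinuousOn (fun p : ℝ × ℝ => |lam0 - c1 p.1 + c1 p.2|) Dset :=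
    ((continuousOn_const.sub (hc1.comp continuousOn_fst fun p hp => (hD p hp).1)).add
      (hc1.comp continuousOn_snd fun p hp => (hD p hp).2)).abs
  refine le_max_of_le_right (le_csSup (isCompact_Dset.bddAbove_image hcont)
    ⟨((τ + s) / 2, (τ - s) / 2), ⟨by linarith, by linarith, by linarith⟩, rfl⟩)

lemma abs_le_fbar (hf : ContinuousOn (fun p : ℝ × ℝ => f p.1 p.2) (Icc 0 1 ×ˢ Icc 0 1))
    {x y : ℝ} (hx : x ∈ Icc (0:ℝ) 1) (hy : y ∈ Icc (0:ℝ) 1) : |f x y| ≤ fbar f :=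
  le_csSup ((isCompact_Icc.prod isCompact_Icc).bddAbove_image hf.abs)
    ⟨(x, y), ⟨hx, hy⟩, rfl⟩

end Constants

section Congruence

variable {lam0 : ℝ} {c1 c1' : ℝ → ℝ} {f f' H H' : ℝ → ℝ → ℝ} {xi eta : ℝ}

lemma mutld_congr (hc : EqOn c1' c1 (Icc 0 1)) {τ s : ℝ} (hp : (τ, s) ∈ Eset) :
    mutld lam0 c1' τ s = mutld lam0 c1 τ s := by
  obtain ⟨h0, h1, h2, h3⟩ := mem_Eset_iff.1 hp
  rw [mutld, mutld, hc ⟨by linarith, by linarith⟩, hc ⟨by linarith, by linarith⟩]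

lemma Gzero_congr (hf : ∀ x ∈ Icc (0:ℝ) 1, ∀ y ∈ Icc (0:ℝ) 1, f' x y = f x y)
    (hE : (xi, eta) ∈ Eset) : Gzero lam0 f' xi eta = Gzero lam0 f xi eta := by
  obtain ⟨he0, he1, hex, hx2⟩ := mem_Eset_iff.1 hE
  unfold Gzero
  refine congrArg₂ (· + ·) (congrArg₂ (· + ·) rfl (congrArg _ ?_)) (congrArg _ ?_)
  · refine intervalIntegral_congr_of_le hex fun τ ⟨hτ0, hτ1⟩ => ?_
    refine intervalIntegral_congr_of_le he0 fun s ⟨hs0, hs1⟩ => ?_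
    exact hf _ ⟨by linarith, by linarith⟩ _ ⟨by linarith, by linarith⟩
  · refine intervalIntegral_congr_of_le he0 fun τ ⟨hτ0, hτ1⟩ => ?_
    refine intervalIntegral_congr_of_le hτ0 fun s ⟨hs0, hs1⟩ => ?_
    exact hf _ ⟨by linarith, by linarith⟩ _ ⟨by linarith, by linarith⟩

lemma Phi_congr (hc : EqOn c1' c1 (Icc 0 1))
    (hf : ∀ x ∈ Icc (0:ℝ) 1, ∀ y ∈ Icc (0:ℝ) 1, f' x y = f x y)
    (hH : ∀ τ s, (τ, s) ∈ Eset → H' τ s = H τ s) (hE : (xi, eta) ∈ Eset) :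
    Phi lam0 c1' f' H' xi eta = Phi lam0 c1 f H xi eta := by
  obtain ⟨he0, he1, hex, hx2⟩ := mem_Eset_iff.1 hE
  have hμH : ∀ τ s, (τ, s) ∈ Eset →
      mutld lam0 c1' τ s * H' τ s = mutld lam0 c1 τ s * H τ s :=
    fun τ s hp => by rw [mutld_congr hc hp, hH τ s hp]
  have hfH : ∀ z τ s, (τ, s) ∈ Eset → (τ - s) / 2 ∈ Icc (0:ℝ) 1 →
      z - (τ + s) / 2 ∈ Icc (0:ℝ) 1 → f' ((τ - s) / 2) (z - (τ + s) / 2) * H' τ s =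
        f ((τ - s) / 2) (z - (τ + s) / 2) * H τ s :=
    fun z τ s hp hx hy => by rw [hf _ hx _ hy, hH τ s hp]
  unfold Phi
  refine congrArg₂ (· + ·)
    (congrArg₂ (· + ·) (congrArg₂ (· + ·) (congrArg _ ?_) (congrArg _ ?_)) (congrArg _ ?_))
    (congrArg _ ?_)
  · refine intervalIntegral_congr_of_le hex fun τ ⟨hτ0, hτ1⟩ => ?_
    refine intervalIntegral_congr_of_le he0 fun s ⟨hs0, hs1⟩ => ?_
    exact hμH τ s ⟨by linarith, by linarith, by linarith, by linarith⟩
  · refine intervalIntegral_congr_of_le he0 fun τ ⟨hτ0, hτ1⟩ => ?_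
    refine intervalIntegral_congr_of_le hτ0 fun s ⟨hs0, hs1⟩ => ?_
    exact hμH τ s ⟨by linarith, by linarith, by linarith, by linarith⟩
  · refine intervalIntegral_congr_of_le hex fun z ⟨hz0, hz1⟩ => ?_
    refine intervalIntegral_congr_of_le he0 fun s ⟨hs0, hs1⟩ => ?_
    refine intervalIntegral_congr_of_le (by linarith) fun τ ⟨hτ0, hτ1⟩ => ?_
    exact hfH z τ s ⟨by linarith, by linarith, by linarith, by linarith⟩
      ⟨by linarith, by linarith⟩ ⟨by linarith, by linarith⟩
  · refine intervalIntegral_congr_of_le he0 fun z ⟨hz0, hz1⟩ => ?_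
    refine intervalIntegral_congr_of_le hz0 fun s ⟨hs0, hs1⟩ => ?_
    refine intervalIntegral_congr_of_le (by linarith) fun τ ⟨hτ0, hτ1⟩ => ?_
    exact hfH z τ s ⟨by linarith, by linarith, by linarith, by linarith⟩
      ⟨by linarith, by linarith⟩ ⟨by linarith, by linarith⟩

lemma Gseq_congr (hc : EqOn c1' c1 (Icc 0 1))
    (hf : ∀ x ∈ Icc (0:ℝ) 1, ∀ y ∈ Icc (0:ℝ) 1, f' x y = f x y) (n : ℕ)
    (hE : (xi, eta) ∈ Eset) : Gseq lam0 c1' f' n xi eta = Gseq lam0 c1 f n xi eta := by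
  induction n generalizing xi eta with
  | zero => exact Gzero_congr hf hE
  | succ n ih =>
    exact congrArg₂ (· + ·) (Gzero_congr hf hE) (Phi_congr hc hf (fun τ s => ih) hE)

end Congruence

section Continuity

variable {lam0 : ℝ} {c1 : ℝ → ℝ} {f H₁ H₂ : ℝ → ℝ → ℝ}

@[fun_prop]
lemma Continuous.mutld {X : Type*} [TopologicalSpace X] (hc1 : Continuous c1) {a b : X → ℝ}
    (ha : Continuous a) (hb : Continuous b) : Continuous fun x => mutld lam0 c1 (a x) (b x) := by
  unfold _root_.mutld
  fun_prop

lemma continuous_Gseq (hc1 : Continuous c1) (hf : Continuous fun p : ℝ × ℝ => f p.1 p.2)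
    (n : ℕ) : Continuous fun p : ℝ × ℝ => Gseq lam0 c1 f n p.1 p.2 := by
  induction n with
  | zero => unfold Gseq Gzero; fun_prop
  | succ n ih => unfold Gseq Gzero Phi; fun_prop

lemma Phi_sub_of_continuous (hc1 : Continuous c1) (hf : Continuous fun p : ℝ × ℝ => f p.1 p.2)
    (hH₁ : Continuous fun p : ℝ × ℝ => H₁ p.1 p.2)
    (hH₂ : Continuous fun p : ℝ × ℝ => H₂ p.1 p.2)
    (xi eta : ℝ) :
    Phi lam0 c1 f (H₁ - H₂) xi eta = Phi lam0 c1 f H₁ xi eta - Phi lam0 c1 f H₂ xi eta := by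
  unfold Phi
  simp (disch := exact Continuous.intervalIntegrable (by fun_prop) _ _) only
    [Pi.sub_apply, mul_sub, intervalIntegral.integral_sub]
  ring

end Continuity

section Extension

variable {lam0 : ℝ} {c1 : ℝ → ℝ} {f H₁ H₂ : ℝ → ℝ → ℝ}

lemma exists_continuous_extension₂ {H : ℝ → ℝ → ℝ} {s : Set (ℝ × ℝ)}
    (hH : ContinuousOn (fun p : ℝ × ℝ => H p.1 p.2) s) (hs : IsClosed s) :
    ∃ H' : ℝ → ℝ → ℝ, (Continuous fun p : ℝ × ℝ => H' p.1 p.2) ∧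
      ∀ x y, (x, y) ∈ s → H' x y = H x y := by
  obtain ⟨G, hG, hGH⟩ := hH.exists_continuous_eqOn hs
  exact ⟨fun x y => G (x, y), hG, fun x y hp => hGH hp⟩

lemma continuousOn_Gseq (hc1 : ContinuousOn c1 (Icc 0 1))
    (hf : ContinuousOn (fun p : ℝ × ℝ => f p.1 p.2) (Icc 0 1 ×ˢ Icc 0 1)) (n : ℕ) :
    ContinuousOn (fun p : ℝ × ℝ => Gseq lam0 c1 f n p.1 p.2) Eset := by
  obtain ⟨c1', hc1', hc1c1'⟩ := hc1.exists_continuous_eqOn isClosed_Icc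
  obtain ⟨f', hf', hff'⟩ := exists_continuous_extension₂ hf (isClosed_Icc.prod isClosed_Icc)
  exact (continuous_Gseq hc1' hf' n).continuousOn.congr fun p hp =>
    (Gseq_congr hc1c1' (fun x hx y hy => hff' x y ⟨hx, hy⟩) n hp).symm

lemma Phi_sub (hc1 : ContinuousOn c1 (Icc 0 1))
    (hf : ContinuousOn (fun p : ℝ × ℝ => f p.1 p.2) (Icc 0 1 ×ˢ Icc 0 1))
    (hH₁ : ContinuousOn (fun p : ℝ × ℝ => H₁ p.1 p.2) Eset)
    (hH₂ : ContinuousOn (fun p : ℝ × ℝ => H₂ p.1 p.2) Eset) {xi eta : ℝ}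
    (hE : (xi, eta) ∈ Eset) :
    Phi lam0 c1 f (H₁ - H₂) xi eta = Phi lam0 c1 f H₁ xi eta - Phi lam0 c1 f H₂ xi eta := by
  obtain ⟨c1', hc1', hc1c1'⟩ := hc1.exists_continuous_eqOn isClosed_Icc
  obtain ⟨f', hf', hff'⟩ := exists_continuous_extension₂ hf (isClosed_Icc.prod isClosed_Icc)
  obtain ⟨H₁', hH₁', hH₁H₁'⟩ := exists_continuous_extension₂ hH₁ isClosed_Eset
  obtain ⟨H₂', hH₂', hH₂H₂'⟩ := exists_continuous_extension₂ hH₂ isClosed_Eset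
  have hff : ∀ x ∈ Icc (0:ℝ) 1, ∀ y ∈ Icc (0:ℝ) 1, f' x y = f x y :=
    fun x hx y hy => hff' x y ⟨hx, hy⟩
  rw [← Phi_congr hc1c1' hff hH₁H₁' hE, ← Phi_congr hc1c1' hff hH₂H₂' hE,
    ← Phi_congr (H' := H₁' - H₂') hc1c1' hff
      (fun τ s hp => by simp [hH₁H₁' τ s hp, hH₂H₂' τ s hp]) hE]
  exact Phi_sub_of_continuous hc1' hf' hH₁' hH₂' xi eta

end Extension

section Estimate

variable {lam0 : ℝ} {c1 : ℝ → ℝ} {f K : ℝ → ℝ → ℝ} {L F c : ℝ} {n : ℕ}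
  {xi eta : ℝ}

lemma nonneg_of_abs_le_pow (hK : ∀ τ s, (τ, s) ∈ Eset → |K τ s| ≤ c * (τ + s) ^ n) :
    0 ≤ c := by
  simpa using (abs_nonneg _).trans (hK 1 0 (mem_Eset_iff.2 (by norm_num)))

lemma abs_mul_le_of_abs_le_pow (hK : ∀ τ s, (τ, s) ∈ Eset → |K τ s| ≤ c * (τ + s) ^ n)
    {w B τ s T : ℝ} (hw : |w| ≤ B) (hp : (τ, s) ∈ Eset) (hT : τ + s ≤ T) :
    |w * K τ s| ≤ B * (c * T ^ n) := by
  obtain ⟨h0, -, h2, -⟩ := mem_Eset_iff.1 hp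
  have hc := nonneg_of_abs_le_pow hK
  rw [abs_mul]
  exact mul_le_mul hw ((hK τ s hp).trans (by gcongr; linarith)) (abs_nonneg _)
    ((abs_nonneg w).trans hw)

lemma abs_integral_mutld_rect_le (hμ : ∀ τ s, (τ, s) ∈ Eset → |mutld lam0 c1 τ s| ≤ L)
    (hK : ∀ τ s, (τ, s) ∈ Eset → |K τ s| ≤ c * (τ + s) ^ n)
    (hE : (xi, eta) ∈ Eset) :
    |∫ τ in eta..xi, ∫ s in (0:ℝ)..eta, mutld lam0 c1 τ s * K τ s| ≤
      L * c * eta * ((xi + eta) ^ (n + 1) - (eta + eta) ^ (n + 1)) / (n + 1) := by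
  obtain ⟨he0, he1, hex, hx2⟩ := mem_Eset_iff.1 hE
  refine abs_intervalIntegral_le_of_le_pow hex fun τ ⟨hτ0, hτ1⟩ => ?_
  calc _ ≤ L * (c * (τ + eta) ^ n) * eta :=
        abs_intervalIntegral_le_of_le_const he0 (sub_zero eta).le fun s ⟨hs0, hs1⟩ =>
          have hp : (τ, s) ∈ Eset := ⟨hs0, by linarith, by linarith, by linarith⟩
          abs_mul_le_of_abs_le_pow hK (hμ τ s hp) hp (by linarith)
    _ = L * c * eta * (τ + eta) ^ n := by ring

lemma abs_integral_mutld_tri_le (hμ : ∀ τ s, (τ, s) ∈ Eset → |mutld lam0 c1 τ s| ≤ L)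
    (hK : ∀ τ s, (τ, s) ∈ Eset → |K τ s| ≤ c * (τ + s) ^ n)
    (hE : (xi, eta) ∈ Eset) :
    |∫ τ in (0:ℝ)..eta, ∫ s in (0:ℝ)..τ, mutld lam0 c1 τ s * K τ s| ≤
      L * c * eta * ((eta + eta) ^ (n + 1) - eta ^ (n + 1)) / (n + 1) := by
  obtain ⟨he0, he1, hex, hx2⟩ := mem_Eset_iff.1 hE
  have hinner : ∀ τ ∈ Icc 0 eta, |∫ s in (0:ℝ)..τ, mutld lam0 c1 τ s * K τ s| ≤
      L * c * eta * (τ + eta) ^ n := fun τ ⟨hτ0, hτ1⟩ =>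
    calc _ ≤ L * (c * (τ + eta) ^ n) * eta :=
          abs_intervalIntegral_le_of_le_const hτ0 (by linarith) fun s ⟨hs0, hs1⟩ =>
            have hp : (τ, s) ∈ Eset := ⟨hs0, by linarith, hs1, by linarith⟩
            abs_mul_le_of_abs_le_pow hK (hμ τ s hp) hp (by linarith)
      _ = L * c * eta * (τ + eta) ^ n := by ring
  simpa only [zero_add] using abs_intervalIntegral_le_of_le_pow he0 hinner

lemma abs_integral_f_rect_le (hf : ∀ x ∈ Icc (0:ℝ) 1, ∀ y ∈ Icc (0:ℝ) 1, |f x y| ≤ F)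
    (hK : ∀ τ s, (τ, s) ∈ Eset → |K τ s| ≤ c * (τ + s) ^ n)
    (hE : (xi, eta) ∈ Eset) :
    |∫ z in eta..xi, ∫ s in (0:ℝ)..eta, ∫ τ in z..(z + eta - s),
        f ((τ - s) / 2) (z - (τ + s) / 2) * K τ s| ≤
      F * c * eta ^ 2 * ((xi + eta) ^ (n + 1) - (eta + eta) ^ (n + 1)) / (n + 1) := by
  obtain ⟨he0, he1, hex, hx2⟩ := mem_Eset_iff.1 hE
  refine abs_intervalIntegral_le_of_le_pow hex fun z ⟨hz0, hz1⟩ => ?_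
  calc _ ≤ F * (c * (z + eta) ^ n) * eta * eta :=
        abs_intervalIntegral_le_of_le_const he0 (sub_zero eta).le fun s ⟨hs0, hs1⟩ =>
          abs_intervalIntegral_le_of_le_const (by linarith) (by linarith) fun τ ⟨hτ0, hτ1⟩ =>
            abs_mul_le_of_abs_le_pow hK (hf _ ⟨by linarith, by linarith⟩ _
              ⟨by linarith, by linarith⟩) ⟨hs0, by linarith, by linarith, by linarith⟩
              (by linarith)
    _ = F * c * eta ^ 2 * (z + eta) ^ n := by ring

lemma abs_integral_f_tri_le (hf : ∀ x ∈ Icc (0:ℝ) 1, ∀ y ∈ Icc (0:ℝ) 1, |f x y| ≤ F)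
    (hK : ∀ τ s, (τ, s) ∈ Eset → |K τ s| ≤ c * (τ + s) ^ n)
    (hE : (xi, eta) ∈ Eset) :
    |∫ z in (0:ℝ)..eta, ∫ s in (0:ℝ)..z, ∫ τ in z..(2 * z - s),
        f ((τ - s) / 2) (z - (τ + s) / 2) * K τ s| ≤
      F * c * eta ^ 2 * ((eta + eta) ^ (n + 1) - eta ^ (n + 1)) / (n + 1) := by
  obtain ⟨he0, he1, hex, hx2⟩ := mem_Eset_iff.1 hE
  have hinner : ∀ z ∈ Icc 0 eta, |∫ s in (0:ℝ)..z, ∫ τ in z..(2 * z - s),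
      f ((τ - s) / 2) (z - (τ + s) / 2) * K τ s| ≤ F * c * eta ^ 2 * (z + eta) ^ n :=
    fun z ⟨hz0, hz1⟩ =>
    calc _ ≤ F * (c * (z + eta) ^ n) * eta * eta :=
          abs_intervalIntegral_le_of_le_const hz0 (by linarith) fun s ⟨hs0, hs1⟩ =>
            abs_intervalIntegral_le_of_le_const (by linarith) (by linarith)
              fun τ ⟨hτ0, hτ1⟩ => abs_mul_le_of_abs_le_pow hK (hf _ ⟨by linarith, by linarith⟩ _
                ⟨by linarith, by linarith⟩) ⟨hs0, by linarith, by linarith, by linarith⟩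
                (by linarith)
      _ = F * c * eta ^ 2 * (z + eta) ^ n := by ring
  simpa only [zero_add] using abs_intervalIntegral_le_of_le_pow he0 hinner

lemma abs_Phi_le (hμ : ∀ τ s, (τ, s) ∈ Eset → |mutld lam0 c1 τ s| ≤ L)
    (hf : ∀ x ∈ Icc (0:ℝ) 1, ∀ y ∈ Icc (0:ℝ) 1, |f x y| ≤ F)
    (hK : ∀ τ s, (τ, s) ∈ Eset → |K τ s| ≤ c * (τ + s) ^ n)
    (hE : (xi, eta) ∈ Eset) :
    |Phi lam0 c1 f K xi eta| ≤ c * ((F + L) / 2) * (xi + eta) ^ (n + 1) / (n + 1) := by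
  obtain ⟨he0, he1, hex, hx2⟩ := mem_Eset_iff.1 hE
  have hL : 0 ≤ L := (abs_nonneg _).trans (hμ 0 0 (mem_Eset_iff.2 (by norm_num)))
  have hF : 0 ≤ F := (abs_nonneg _).trans (hf 0 (by norm_num) 0 (by norm_num))
  have hc := nonneg_of_abs_le_pow hK
  obtain ⟨h₁, h₁'⟩ := abs_le.1 (abs_integral_mutld_rect_le hμ hK hE)
  obtain ⟨h₂, h₂'⟩ := abs_le.1 (abs_integral_mutld_tri_le hμ hK hE)
  obtain ⟨h₃, h₃'⟩ := abs_le.1 (abs_integral_f_rect_le hf hK hE)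
  obtain ⟨h₄, h₄'⟩ := abs_le.1 (abs_integral_f_tri_le hf hK hE)
  have hQP : (eta + eta) ^ (n + 1) ≤ (xi + eta) ^ (n + 1) := by gcongr
  have hRQ : eta ^ (n + 1) ≤ (eta + eta) ^ (n + 1) := by gcongr; linarith
  have hR : 0 ≤ eta ^ (n + 1) := by positivity
  have hW : L * eta + F * eta ^ 2 ≤ L + F := add_le_add (mul_le_of_le_one_right hL he1)
    (mul_le_of_le_one_right hF (pow_le_one₀ he0 he1))
  set P := (xi + eta) ^ (n + 1)
  set Q := (eta + eta) ^ (n + 1)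
  set R := eta ^ (n + 1)
  calc |Phi lam0 c1 f K xi eta|
      ≤ 1 / 4 * (L * c * eta * (P - Q) / (n + 1)) + 1 / 2 * (L * c * eta * (Q - R) / (n + 1))
        + 1 / 4 * (F * c * eta ^ 2 * (P - Q) / (n + 1))
        + 1 / 2 * (F * c * eta ^ 2 * (Q - R) / (n + 1)) := by
        unfold Phi
        rw [abs_le]
        constructor <;> linarith
    _ = c * (L * eta + F * eta ^ 2) * (P + Q - 2 * R) / 4 / (n + 1) := by ring
    _ ≤ c * (L + F) * (2 * P) / 4 / (n + 1) := by
        gcongr c * ?_ * ?_ / 4 / _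
        · linarith
        · linarith
    _ = c * ((F + L) / 2) * P / (n + 1) := by ring

end Estimate

theorem Gseq_approximates_solution_general (lam0 : ℝ)
    (c1 : ℝ → ℝ) (hc1 : ContinuousOn c1 (Icc 0 1))
    (f : ℝ → ℝ → ℝ)
    (hf : ContinuousOn (fun p : ℝ × ℝ => f p.1 p.2) (Icc 0 1 ×ˢ Icc 0 1))
    (Gb : ℝ → ℝ → ℝ) (hGbcont : ContinuousOn (fun p : ℝ × ℝ => Gb p.1 p.2) Eset)
    (hGbeq : ∀ xi eta : ℝ, (xi, eta) ∈ Eset →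
      Gb xi eta = Gzero lam0 f xi eta + Phi lam0 c1 f Gb xi eta)
    (delta : ℝ)
    (hdelta : IsGreatest ((fun p : ℝ × ℝ => |Phi lam0 c1 f Gb p.1 p.2|) '' Eset) delta) :
    ∀ n : ℕ, ∀ xi eta : ℝ, (xi, eta) ∈ Eset →
      |Gseq lam0 c1 f n xi eta - Gb xi eta| ≤
        delta * Mconst lam0 c1 f ^ n / (Nat.factorial n : ℝ) * (xi + eta) ^ n := by
  intro n
  induction n with
  | zero =>
    intro xi eta hE
    have hG₀ : Gseq lam0 c1 f 0 xi eta - Gb xi eta = -Phi lam0 c1 f Gb xi eta := by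
      rw [hGbeq xi eta hE, Gseq]
      ring
    simpa [hG₀] using hdelta.2 ⟨(xi, eta), hE, rfl⟩
  | succ n ih =>
    intro xi eta hE
    have hGsucc : Gseq lam0 c1 f (n + 1) xi eta - Gb xi eta =
        Phi lam0 c1 f (Gseq lam0 c1 f n - Gb) xi eta := by
      rw [Phi_sub hc1 hf (continuousOn_Gseq hc1 hf n) hGbcont hE, hGbeq xi eta hE, Gseq]
      ring
    rw [hGsucc]
    refine (abs_Phi_le (fun τ s hp => abs_mutld_le_Lambdabar hc1 hp)
      (fun x hx y hy => abs_le_fbar hf hx hy) ih hE).trans_eq ?_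
    rw [← Mconst, Nat.factorial_succ, Nat.cast_mul, pow_succ]
    push_cast
    field_simp
    ring

/-- Any continuous solution `Ḡ` of the integral equation is approximated by the successive
approximations: `|G_n - Ḡ| ≤ δ M^n / n! (ξ+η)^n` on `E`, where `δ = max_E |Φ_Ḡ|`. -/
theorem Gseq_approximates_solution (lam0 : ℝ) (hlam0 : 0 < lam0)
    (c1 : ℝ → ℝ) (hc1 : ContinuousOn c1 (Icc 0 1))
    (f : ℝ → ℝ → ℝ)
    (hf : ContinuousOn (fun p : ℝ × ℝ => f p.1 p.2) (Icc 0 1 ×ˢ Icc 0 1))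
    (Gb : ℝ → ℝ → ℝ) (hGbcont : ContinuousOn (fun p : ℝ × ℝ => Gb p.1 p.2) Eset)
    (hGbeq : ∀ xi eta : ℝ, (xi, eta) ∈ Eset →
      Gb xi eta = Gzero lam0 f xi eta + Phi lam0 c1 f Gb xi eta)
    (delta : ℝ)
    (hdelta : IsGreatest ((fun p : ℝ × ℝ => |Phi lam0 c1 f Gb p.1 p.2|) '' Eset) delta) :
    ∀ n : ℕ, ∀ xi eta : ℝ, (xi, eta) ∈ Eset →
      |Gseq lam0 c1 f n xi eta - Gb xi eta| ≤
        delta * Mconst lam0 c1 f ^ n / (Nat.factorial n : ℝ) * (xi + eta) ^ n :=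
  Gseq_approximates_solution_general lam0 c1 hc1 f hf Gb hGbcont hGbeq delta hdelta
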